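/- arXiv:1910.02691 — 2 statements merged into one kernel-verified Lean document; each statement's English description precedes it below -/
import Mathlib

section
/- There exists n₀ ∈ ℕ such that for all n ≥ n₀ the following holds. Let X = {1, …, ⌈(n+1)/3⌉} ⊆ [n] and let H be the 3-graph on [n] whose edges are exactly those 3-element subsets e of [n] with |e ∩ X| ≠ 2. Then d(i,j) ≥ min(i, j, n/2) − 1 for all pairs {i,j} of distinct vertices of [n], but H contains no tight Hamiltonian cycle. -/
/-- The pair degree `d(i,j)`: the number of vertices `x` with `{i,j,x} ∈ E`. -/
def pairDeg (n : ℕ) (E : Finset (Finset ℕ)) (i j : ℕ) : ℕ :=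
  ((Finset.Icc 1 n).filter fun x => ({i, j, x} : Finset ℕ) ∈ E).card

/-- `([n], E)` contains a tight Hamiltonian cycle. -/
def HasTightHamCycle (n : ℕ) (E : Finset (Finset ℕ)) : Prop :=
  ∃ f : ZMod n → ℕ, Function.Injective f ∧ (∀ i, f i ∈ Finset.Icc 1 n) ∧
    (∀ v ∈ Finset.Icc 1 n, ∃ i, f i = v) ∧
    ∀ i : ZMod n, ({f i, f (i + 1), f (i + 2)} : Finset ℕ) ∈ E

lemma triple_inter_card (u v w : ℕ) (X : Finset ℕ) (huv : u ≠ v) (huw : u ≠ w) (hvw : v ≠ w) :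
    (({u, v, w} : Finset ℕ) ∩ X).card =
      (if u ∈ X then 1 else 0) + (if v ∈ X then 1 else 0) + (if w ∈ X then 1 else 0) := by
  rw [← Finset.filter_mem_eq_inter, Finset.card_filter]
  rw [show ({u,v,w} : Finset ℕ) = insert u (insert v {w}) from rfl]
  rw [Finset.sum_insert (by simp [huv, huw]), Finset.sum_insert (by simp [hvw]),
    Finset.sum_singleton, add_assoc]

lemma triple_card (u v w : ℕ) (huv : u ≠ v) (huw : u ≠ w) (hvw : v ≠ w) :
    ({u, v, w} : Finset ℕ).card = 3 := by
  rw [Finset.card_insert_of_notMem (by simp [huv, huw]),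
    Finset.card_insert_of_notMem (by simp [hvw]), Finset.card_singleton]

lemma mem_E_iff (n : ℕ) (e : Finset ℕ) :
    e ∈ ((Finset.Icc 1 n).powersetCard 3).filter
        (fun e => (e ∩ Finset.Icc 1 ((n + 3) / 3)).card ≠ 2) ↔
      e ⊆ Finset.Icc 1 n ∧ e.card = 3 ∧ (e ∩ Finset.Icc 1 ((n + 3) / 3)).card ≠ 2 := by
  simp [Finset.mem_filter, Finset.mem_powersetCard, and_assoc]

lemma deg_bound (n : ℕ) (hn : 20 ≤ n) (E : Finset (Finset ℕ))
    (hE : E = ((Finset.Icc 1 n).powersetCard 3).filter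
        (fun e => (e ∩ Finset.Icc 1 ((n + 3) / 3)).card ≠ 2))
    (i j : ℕ) (hi : i ∈ Finset.Icc 1 n) (hj : j ∈ Finset.Icc 1 n) (hij : i ≠ j)
    (hji : i ≤ j) :
    min (min (i : ℝ) (j : ℝ)) ((n : ℝ) / 2) - 1 ≤ (pairDeg n E i j : ℝ) := by
  set m := (n + 3) / 3 with hm
  have hm3 : 3 * m ≤ n + 3 ∧ n + 1 ≤ 3 * m := by omega
  rw [Finset.mem_Icc] at hi hj
  -- generic subset-to-card tool
  have hcard : ∀ S : Finset ℕ,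
      (∀ x ∈ S, x ∈ Finset.Icc 1 n ∧ ({i, j, x} : Finset ℕ) ∈ E) →
      S.card ≤ pairDeg n E i j := by
    intro S hS
    apply Finset.card_le_card
    intro x hx
    rw [Finset.mem_filter]
    exact hS x hx
  by_cases hjm : j ≤ m
  · -- both in X
    have him : i ≤ m := le_trans hji hjm
    have h1 : (Finset.Icc 1 m \ {i, j}).card ≤ pairDeg n E i j := by
      apply hcard
      intro x hx
      rw [Finset.mem_sdiff, Finset.mem_Icc] at hx
      obtain ⟨⟨hx1, hxm⟩, hxij⟩ := hx
      rw [Finset.mem_insert, Finset.mem_singleton] at hxij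
      push_neg at hxij
      obtain ⟨hxi, hxj⟩ := hxij
      have hmn : m ≤ n := by omega
      refine ⟨by rw [Finset.mem_Icc]; omega, ?_⟩
      rw [hE, mem_E_iff]
      refine ⟨?_, triple_card i j x hij (Ne.symm hxi) (Ne.symm hxj), ?_⟩
      · intro y hy
        simp only [Finset.mem_insert, Finset.mem_singleton] at hy
        rw [Finset.mem_Icc]
        rcases hy with rfl | rfl | rfl <;> omega
      · rw [triple_inter_card i j x _ hij (Ne.symm hxi) (Ne.symm hxj)]
        simp only [Finset.mem_Icc]
        split_ifs <;> omega
    have h2 : m - 2 ≤ (Finset.Icc 1 m \ {i, j}).card := by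
      have := Finset.le_card_sdiff ({i, j} : Finset ℕ) (Finset.Icc 1 m)
      have hc2 : ({i, j} : Finset ℕ).card ≤ 2 := Finset.card_insert_le _ _ |>.trans (by simp)
      rw [Nat.card_Icc] at this
      omega
    have key : min i j + 1 ≤ pairDeg n E i j + 2 := by omega
    calc min (min (i:ℝ) j) ((n:ℝ)/2) - 1 ≤ min (i:ℝ) j - 1 := by
          have := min_le_left (min (i:ℝ) j) ((n:ℝ)/2); linarith
      _ ≤ (pairDeg n E i j : ℝ) := by
          rw [← Nat.cast_min]
          have : ((min i j : ℕ) : ℝ) + 1 ≤ (pairDeg n E i j : ℝ) + 2 := by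
            exact_mod_cast Nat.cast_le.mpr key
          linarith
  · -- j not in X
    suffices h : (n : ℝ) / 2 - 1 ≤ (pairDeg n E i j : ℝ) by
      have := min_le_right (min (i:ℝ) j) ((n:ℝ)/2); linarith
    by_cases him : i ≤ m
    · -- i in X, j not
      have h1 : ((Finset.Icc 1 n \ Finset.Icc 1 m) \ {i, j}).card ≤ pairDeg n E i j := by
        apply hcard
        intro x hx
        rw [Finset.mem_sdiff, Finset.mem_sdiff, Finset.mem_Icc, Finset.mem_Icc] at hx
        obtain ⟨⟨⟨hx1, hxn⟩, hxm⟩, hxij⟩ := hx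
        rw [Finset.mem_insert, Finset.mem_singleton] at hxij
        push_neg at hxij
        obtain ⟨hxi, hxj⟩ := hxij
        refine ⟨by rw [Finset.mem_Icc]; omega, ?_⟩
        rw [hE, mem_E_iff]
        refine ⟨?_, triple_card i j x hij (Ne.symm hxi) (Ne.symm hxj), ?_⟩
        · intro y hy
          simp only [Finset.mem_insert, Finset.mem_singleton] at hy
          rw [Finset.mem_Icc]
          rcases hy with rfl | rfl | rfl <;> omega
        · rw [triple_inter_card i j x _ hij (Ne.symm hxi) (Ne.symm hxj)]
          simp only [Finset.mem_Icc]
          split_ifs <;> omega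
      have h2 : n - m - 2 ≤ ((Finset.Icc 1 n \ Finset.Icc 1 m) \ {i, j}).card := by
        have ha := Finset.le_card_sdiff ({i, j} : Finset ℕ) (Finset.Icc 1 n \ Finset.Icc 1 m)
        have hb : (Finset.Icc 1 n \ Finset.Icc 1 m).card = n - m := by
          rw [Finset.card_sdiff_of_subset (by intro y hy; rw [Finset.mem_Icc] at *; omega),
            Nat.card_Icc, Nat.card_Icc]
          omega
        have hc2 : ({i, j} : Finset ℕ).card ≤ 2 := Finset.card_insert_le _ _ |>.trans (by simp)
        omega
      have key : n ≤ 2 * pairDeg n E i j + 2 := by omega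
      have : (n : ℝ) ≤ 2 * (pairDeg n E i j : ℝ) + 2 := by exact_mod_cast Nat.cast_le.mpr key
      linarith
    · -- neither in X
      have h1 : (Finset.Icc 1 n \ {i, j}).card ≤ pairDeg n E i j := by
        apply hcard
        intro x hx
        rw [Finset.mem_sdiff, Finset.mem_Icc] at hx
        obtain ⟨⟨hx1, hxn⟩, hxij⟩ := hx
        rw [Finset.mem_insert, Finset.mem_singleton] at hxij
        push_neg at hxij
        obtain ⟨hxi, hxj⟩ := hxij
        refine ⟨by rw [Finset.mem_Icc]; omega, ?_⟩
        rw [hE, mem_E_iff]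
        refine ⟨?_, triple_card i j x hij (Ne.symm hxi) (Ne.symm hxj), ?_⟩
        · intro y hy
          simp only [Finset.mem_insert, Finset.mem_singleton] at hy
          rw [Finset.mem_Icc]
          rcases hy with rfl | rfl | rfl <;> omega
        · rw [triple_inter_card i j x _ hij (Ne.symm hxi) (Ne.symm hxj)]
          simp only [Finset.mem_Icc]
          split_ifs <;> omega
      have h2 : n - 2 ≤ (Finset.Icc 1 n \ {i, j}).card := by
        have := Finset.le_card_sdiff ({i, j} : Finset ℕ) (Finset.Icc 1 n)
        have hc2 : ({i, j} : Finset ℕ).card ≤ 2 := Finset.card_insert_le _ _ |>.trans (by simp)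
        rw [Nat.card_Icc] at this
        omega
      have key : n ≤ 2 * pairDeg n E i j + 2 := by omega
      have : (n : ℝ) ≤ 2 * (pairDeg n E i j : ℝ) + 2 := by exact_mod_cast Nat.cast_le.mpr key
      linarith

lemma no_ham (n : ℕ) (hn : 20 ≤ n) (E : Finset (Finset ℕ))
    (hE : E = ((Finset.Icc 1 n).powersetCard 3).filter
        (fun e => (e ∩ Finset.Icc 1 ((n + 3) / 3)).card ≠ 2)) :
    ¬ HasTightHamCycle n E := by
  rintro ⟨f, hinj, hmem, hsurj, hedge⟩
  haveI : NeZero n := ⟨by omega⟩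
  set m := (n + 3) / 3 with hm
  set X := Finset.Icc 1 m with hX
  set a : ZMod n → ℕ := fun i => if f i ∈ X then 1 else 0 with ha
  have ha01 : ∀ i, a i ≤ 1 := by intro i; simp only [ha]; split_ifs <;> omega
  -- distinctness of i, i+1, i+2
  have hone : (1 : ZMod n) ≠ 0 := by
    have : ((1 : ℕ) : ZMod n) = 0 ↔ n ∣ 1 := ZMod.natCast_eq_zero_iff 1 n
    simp only [Nat.cast_one] at this
    intro h; rw [this] at h
    have := Nat.le_of_dvd (by norm_num) h; omega
  have htwo : (2 : ZMod n) ≠ 0 := by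
    have : ((2 : ℕ) : ZMod n) = 0 ↔ n ∣ 2 := ZMod.natCast_eq_zero_iff 2 n
    simp only [Nat.cast_ofNat] at this
    intro h; rw [this] at h
    have := Nat.le_of_dvd (by norm_num) h; omega
  have hd1 : ∀ i : ZMod n, i ≠ i + 1 := by
    intro i h; exact hone (by rwa [left_eq_add] at h)
  have hd2 : ∀ i : ZMod n, i ≠ i + 2 := by
    intro i h; exact htwo (by rwa [left_eq_add] at h)
  have hd3 : ∀ i : ZMod n, i + 1 ≠ i + 2 := by
    intro i h
    have : (1 : ZMod n) = 2 := by exact add_left_cancel h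
    have h2 : (2 : ZMod n) - 1 = 0 := by rw [← this]; ring
    have : (2 : ZMod n) - 1 = 1 := by ring
    rw [this] at h2; exact hone h2
  have hwin : ∀ i : ZMod n, a i + a (i + 1) + a (i + 2) ≠ 2 := by
    intro i h2
    have he := hedge i
    rw [hE, Finset.mem_filter, Finset.mem_powersetCard] at he
    apply he.2
    rw [triple_inter_card _ _ _ _ (fun h => hd1 i (hinj h)) (fun h => hd2 i (hinj h))
      (fun h => hd3 i (hinj h))]
    exact h2
  -- sum of a is m
  have hmn : m ≤ n := by omega
  have hsum : ∑ i : ZMod n, a i = m := by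
    have h1 : ∑ i : ZMod n, a i = (Finset.univ.filter (fun i : ZMod n => f i ∈ X)).card := by
      rw [Finset.card_filter]
    rw [h1]
    have h2 : (Finset.univ.filter (fun i : ZMod n => f i ∈ X)).card = X.card := by
      apply Finset.card_bij (fun i _ => f i)
      · intro i hi; exact (Finset.mem_filter.mp hi).2
      · intro i _ j _ h; exact hinj h
      · intro v hv
        obtain ⟨i, hi⟩ := hsurj v (by
          simp only [hX, Finset.mem_Icc] at hv
          rw [Finset.mem_Icc]; omega)
        exact ⟨i, Finset.mem_filter.mpr ⟨Finset.mem_univ _, by rw [hi]; exact hv⟩, hi⟩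
    rw [h2, hX, Nat.card_Icc]
    omega
  have hshift : ∀ c : ZMod n, ∑ i : ZMod n, a (i + c) = m := by
    intro c
    calc ∑ i : ZMod n, a (i + c) = ∑ i : ZMod n, a i :=
          Fintype.sum_equiv (Equiv.addRight c) _ _ (fun i => rfl)
      _ = m := hsum
  -- some window has sum 3
  have h3m : ∑ i : ZMod n, (a i + a (i + 1) + a (i + 2)) = 3 * m := by
    rw [Finset.sum_add_distrib, Finset.sum_add_distrib, hsum, hshift 1, hshift 2]
    ring
  have hcardn : (Finset.univ : Finset (ZMod n)).card = n := by
    rw [Finset.card_univ, ZMod.card]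
  obtain ⟨i₀, hi₀⟩ : ∃ i : ZMod n, a i + a (i + 1) + a (i + 2) = 3 := by
    by_contra hc
    push_neg at hc
    have hle : ∀ i : ZMod n, a i + a (i + 1) + a (i + 2) ≤ 1 := by
      intro i
      have := hwin i; have := hc i
      have := ha01 i; have := ha01 (i+1); have := ha01 (i+2)
      omega
    have : ∑ i : ZMod n, (a i + a (i + 1) + a (i + 2)) ≤ ∑ _i : ZMod n, 1 :=
      Finset.sum_le_sum (fun i _ => hle i)
    rw [h3m, Finset.sum_const, hcardn, smul_eq_mul, mul_one] at this
    omega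
  -- propagate
  have step : ∀ i : ZMod n, a i = 1 → a (i + 1) = 1 → a (i + 2) = 1 := by
    intro i h1 h2
    have := hwin i; have := ha01 (i + 2); omega
  have base1 : a i₀ = 1 := by have := ha01 i₀; have := ha01 (i₀+1); have := ha01 (i₀+2); omega
  have base2 : a (i₀ + 1) = 1 := by
    have := ha01 i₀; have := ha01 (i₀+1); have := ha01 (i₀+2); omega
  have all1 : ∀ k : ℕ, a (i₀ + k) = 1 ∧ a (i₀ + k + 1) = 1 := by
    intro k
    induction k with
    | zero => simpa using ⟨base1, base2⟩
    | succ k ih =>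
      have hcast : ((k + 1 : ℕ) : ZMod n) = (k : ZMod n) + 1 := by push_cast; ring
      constructor
      · rw [hcast, ← add_assoc]; exact ih.2
      · rw [hcast]
        have := step (i₀ + k) ih.1 ih.2
        rw [show i₀ + ((k : ZMod n) + 1) + 1 = i₀ + (k : ZMod n) + 2 by ring]
        exact this
  have hall : ∀ j : ZMod n, a j = 1 := by
    intro j
    have := (all1 (j - i₀).val).1
    rwa [ZMod.natCast_rightInverse (j - i₀), add_sub_cancel] at this
  have : ∑ i : ZMod n, a i = n := by
    rw [Finset.sum_congr rfl (fun i _ => hall i), Finset.sum_const, hcardn, smul_eq_mul, mul_one]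
  omega

/-- First extremal example: with `X = {1, …, ⌈(n+1)/3⌉}` (note `⌈(n+1)/3⌉ = (n+3)/3`
with truncated division) and `E` consisting of all 3-subsets `e` of `[n]` with
`|e ∩ X| ≠ 2`, every pair of distinct vertices has `d(i,j) ≥ min(i, j, n/2) − 1`,
but there is no tight Hamiltonian cycle. -/
theorem stmt_1 :
    ∃ n₀ : ℕ, ∀ n : ℕ, n₀ ≤ n →
      ∀ E : Finset (Finset ℕ),
        E = ((Finset.Icc 1 n).powersetCard 3).filter
              (fun e => (e ∩ Finset.Icc 1 ((n + 3) / 3)).card ≠ 2) →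
        (∀ i ∈ Finset.Icc 1 n, ∀ j ∈ Finset.Icc 1 n, i ≠ j →
            min (min (i : ℝ) (j : ℝ)) ((n : ℝ) / 2) - 1 ≤ (pairDeg n E i j : ℝ)) ∧
        ¬ HasTightHamCycle n E := by
  refine ⟨20, fun n hn E hE => ⟨?_, no_ham n hn E hE⟩⟩
  have hcomm : ∀ i j, pairDeg n E i j = pairDeg n E j i := by
    intro i j
    unfold pairDeg
    congr 1
    ext x
    simp only [Finset.mem_filter, Finset.insert_comm]
  intro i hi j hj hij
  rcases le_total i j with h | h
  · exact deg_bound n hn E hE i j hi hj hij h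
  · rw [hcomm i j, min_comm (i:ℝ) (j:ℝ)]
    exact deg_bound n hn E hE j i hj hi (Ne.symm hij) h
end

section
/- (Matching Lemma) For all α > 0 and β > 0 there exists n₀ ∈ ℕ such that for all n ≥ n₀ the following holds. Let H = ([n], E) be a 3-graph and let G_H be a graph on vertex set [n] with maximum degree Δ(G_H) ≤ βn. If d(i,j) ≥ min(i, j, n/2) + αn holds for every pair {i,j} of distinct vertices of [n] that is NOT an edge of G_H, then H has a matching M covering at least (1 − 3β)n vertices. -/
/-- `E` is the edge set of a 3-uniform hypergraph on vertex set `[n] = {1, …, n}`. -/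
def IsThreeGraph (n : ℕ) (E : Finset (Finset ℕ)) : Prop :=
  ∀ e ∈ E, e.card = 3 ∧ e ⊆ Finset.Icc 1 n

namespace S9

open Finset
open scoped Classical

def IsM (E M : Finset (Finset ℕ)) : Prop :=
  M ⊆ E ∧ ∀ e ∈ M, ∀ f ∈ M, e ≠ f → Disjoint e f

def cov (M : Finset (Finset ℕ)) : Finset ℕ := M.biUnion id

def UC (n : ℕ) (M : Finset (Finset ℕ)) : Finset ℕ := Finset.Icc 1 n \ cov M

lemma mem_cov {M : Finset (Finset ℕ)} {v : ℕ} : v ∈ cov M ↔ ∃ e ∈ M, v ∈ e := by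
  simp [cov]

lemma edge_sub_cov {M : Finset (Finset ℕ)} {e : Finset ℕ} (he : e ∈ M) : e ⊆ cov M := by
  intro v hv; exact mem_cov.2 ⟨e, he, hv⟩

lemma UC_sub_Icc {n : ℕ} {M : Finset (Finset ℕ)} : UC n M ⊆ Finset.Icc 1 n :=
  sdiff_subset

lemma mem_UC {n : ℕ} {M : Finset (Finset ℕ)} {v : ℕ} :
    v ∈ UC n M ↔ v ∈ Finset.Icc 1 n ∧ v ∉ cov M := by
  simp [UC]

lemma cov_sub_Icc {n : ℕ} {E M : Finset (Finset ℕ)} (h3 : IsThreeGraph n E)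
    (hM : IsM E M) : cov M ⊆ Finset.Icc 1 n := by
  intro v hv
  obtain ⟨e, he, hve⟩ := mem_cov.1 hv
  exact (h3 e (hM.1 he)).2 hve

lemma card_cov {n : ℕ} {E M : Finset (Finset ℕ)} (h3 : IsThreeGraph n E)
    (hM : IsM E M) : (cov M).card = 3 * M.card := by
  rw [cov, card_biUnion]
  · rw [Finset.sum_congr rfl (fun e he => show (id e).card = 3 from (h3 e (hM.1 he)).1)]
    simp [mul_comm]
  · intro e he f hf hef
    exact hM.2 e he f hf hef

lemma card_UC {n : ℕ} {E M : Finset (Finset ℕ)} (h3 : IsThreeGraph n E)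
    (hM : IsM E M) : (UC n M).card = n - 3 * M.card := by
  rw [UC, card_sdiff_of_subset (cov_sub_Icc h3 hM), Nat.card_Icc]
  rw [card_cov h3 hM]
  omega

lemma three_le_n_card {n : ℕ} {E M : Finset (Finset ℕ)} (h3 : IsThreeGraph n E)
    (hM : IsM E M) : 3 * M.card ≤ n := by
  have := card_le_card (cov_sub_Icc (M := M) h3 hM)
  rwa [card_cov h3 hM, Nat.card_Icc, Nat.add_sub_cancel] at this

lemma triple_facts {n : ℕ} {E : Finset (Finset ℕ)} (h3 : IsThreeGraph n E)
    {p q x : ℕ} (hE : ({p, q, x} : Finset ℕ) ∈ E) :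
    p ≠ q ∧ p ≠ x ∧ q ≠ x ∧ p ∈ Finset.Icc 1 n ∧ q ∈ Finset.Icc 1 n ∧ x ∈ Finset.Icc 1 n := by
  obtain ⟨hc, hsub⟩ := h3 _ hE
  have hp : p ∈ ({p, q, x} : Finset ℕ) := by simp
  have hq : q ∈ ({p, q, x} : Finset ℕ) := by simp
  have hx : x ∈ ({p, q, x} : Finset ℕ) := by simp
  refine ⟨?_, ?_, ?_, hsub hp, hsub hq, hsub hx⟩
  · rintro rfl
    have h2 : ({p, p, x} : Finset ℕ) = {p, x} := by
      ext y; simp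
    rw [h2] at hc
    have : ({p, x} : Finset ℕ).card ≤ 2 := card_insert_le _ _ |>.trans (by simp)
    omega
  · rintro rfl
    have h2 : ({p, q, p} : Finset ℕ) = {p, q} := by
      ext y; simp; tauto
    rw [h2] at hc
    have : ({p, q} : Finset ℕ).card ≤ 2 := card_insert_le _ _ |>.trans (by simp)
    omega
  · rintro rfl
    have h2 : ({p, q, q} : Finset ℕ) = {p, q} := by
      ext y; simp
    rw [h2] at hc
    have : ({p, q} : Finset ℕ).card ≤ 2 := card_insert_le _ _ |>.trans (by simp)
    omega


section Swap

variable {n : ℕ} {E GE : Finset (Finset ℕ)}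

/-- The swapped matching. -/
def swp (p q x : ℕ) (e : Finset ℕ) (M : Finset (Finset ℕ)) : Finset (Finset ℕ) :=
  insert {p, q, x} (M.erase e)

lemma swap_props (h3 : IsThreeGraph n E) {M : Finset (Finset ℕ)} (hM : IsM E M)
    {p q x : ℕ} {e : Finset ℕ} (he : e ∈ M) (hx : x ∈ e)
    (hp : p ∈ UC n M) (hq : q ∈ UC n M)
    (hE : ({p, q, x} : Finset ℕ) ∈ E) :
    IsM E (swp p q x e M) ∧ (swp p q x e M).card = M.card ∧
      cov (swp p q x e M) = insert p (insert q (insert x (cov M \ e))) := by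
  have hpq := triple_facts h3 hE
  have hpcov : p ∉ cov M := (mem_UC.1 hp).2
  have hqcov : q ∉ cov M := (mem_UC.1 hq).2
  have hxc : x ∈ cov M := edge_sub_cov he hx
  have hgM : ({p, q, x} : Finset ℕ) ∉ M.erase e := by
    intro hmem
    exact hpcov (edge_sub_cov (mem_of_mem_erase hmem) (by simp))
  have hdisj : ∀ f ∈ M.erase e, Disjoint ({p, q, x} : Finset ℕ) f := by
    intro f hf
    have hfM := mem_of_mem_erase hf
    have hfe : f ≠ e := ne_of_mem_erase hf
    rw [Finset.disjoint_left]
    intro a ha haf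
    have hacov : a ∈ cov M := edge_sub_cov hfM haf
    simp only [mem_insert, mem_singleton] at ha
    rcases ha with rfl | rfl | rfl
    · exact hpcov hacov
    · exact hqcov hacov
    · -- a = x  : x ∈ e and x ∈ f, f ≠ e : contradict disjointness
      have := hM.2 e he f hfM (Ne.symm hfe)
      exact (Finset.disjoint_left.1 this hx) haf
  have hcoverase : cov (M.erase e) = cov M \ e := by
    ext v
    simp only [mem_cov, mem_sdiff, mem_erase]
    constructor
    · rintro ⟨f, ⟨hfe, hfM⟩, hvf⟩
      refine ⟨⟨f, hfM, hvf⟩, ?_⟩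
      intro hve
      exact (Finset.disjoint_left.1 (hM.2 e he f hfM (Ne.symm hfe)) hve) hvf
    · rintro ⟨⟨f, hfM, hvf⟩, hve⟩
      refine ⟨f, ⟨?_, hfM⟩, hvf⟩
      rintro rfl; exact hve hvf
  refine ⟨⟨?_, ?_⟩, ?_, ?_⟩
  · intro f hf
    rcases mem_insert.1 hf with rfl | hf'
    · exact hE
    · exact hM.1 (mem_of_mem_erase hf')
  · intro f hf g hg hfg
    rcases mem_insert.1 hf with rfl | hf' <;> rcases mem_insert.1 hg with rfl | hg'
    · exact absurd rfl hfg
    · exact hdisj g hg'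
    · exact (hdisj f hf').symm
    · exact hM.2 f (mem_of_mem_erase hf') g (mem_of_mem_erase hg') hfg
  · rw [swp, card_insert_of_notMem hgM, card_erase_of_mem he]
    have : 1 ≤ M.card := card_pos.2 ⟨e, he⟩
    omega
  · rw [swp, cov]
    rw [biUnion_insert]
    show ({p, q, x} : Finset ℕ) ∪ cov (M.erase e) = _
    rw [hcoverase]
    ext v
    simp only [mem_union, mem_insert, mem_singleton, mem_sdiff]
    tauto

lemma swap_UC (h3 : IsThreeGraph n E) {M : Finset (Finset ℕ)} (hM : IsM E M)
    {p q x : ℕ} {e : Finset ℕ} (he : e ∈ M) (hx : x ∈ e)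
    (hp : p ∈ UC n M) (hq : q ∈ UC n M)
    (hE : ({p, q, x} : Finset ℕ) ∈ E) {v : ℕ} :
    (v ∈ UC n (swp p q x e M) ↔ (v ∈ UC n M ∧ v ≠ p ∧ v ≠ q) ∨ (v ∈ e ∧ v ≠ x)) := by
  have hcov := (swap_props h3 hM he hx hp hq hE).2.2
  have hesub : e ⊆ Finset.Icc 1 n := (h3 e (hM.1 he)).2
  have hecov : e ⊆ cov M := edge_sub_cov he
  have hpcov : p ∉ cov M := (mem_UC.1 hp).2
  have hqcov : q ∉ cov M := (mem_UC.1 hq).2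
  constructor
  · intro hv
    rw [mem_UC, hcov] at hv
    obtain ⟨hvI, hvn⟩ := hv
    simp only [mem_insert, mem_sdiff, not_or, not_and, not_not] at hvn
    obtain ⟨hvp, hvq, hvx, hvrest⟩ := hvn
    by_cases hve : v ∈ e
    · exact Or.inr ⟨hve, hvx⟩
    · left
      refine ⟨mem_UC.2 ⟨hvI, ?_⟩, hvp, hvq⟩
      intro hvc
      exact hve (hvrest hvc)
  · intro hv
    rw [mem_UC, hcov]
    rcases hv with ⟨hvU, hvp, hvq⟩ | ⟨hve, hvx⟩
    · obtain ⟨hvI, hvc⟩ := mem_UC.1 hvU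
      refine ⟨hvI, ?_⟩
      simp only [mem_insert, mem_sdiff, not_or, not_and, not_not]
      exact ⟨hvp, hvq, fun h => absurd (hecov hx) (h ▸ hvc), fun h => (hvc h).elim⟩
    · refine ⟨hesub hve, ?_⟩
      simp only [mem_insert, mem_sdiff, not_or, not_and, not_not]
      have hvcov : v ∈ cov M := hecov hve
      refine ⟨?_, ?_, hvx, fun _ => hve⟩
      · rintro rfl; exact hpcov hvcov
      · rintro rfl; exact hqcov hvcov

end Swap

section Reach

variable (n : ℕ) (E GE : Finset (Finset ℕ))

/-- Reachability among matchings via swaps that avoid the protected set `P`. -/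
inductive Reach (P : Finset ℕ) (M₀ : Finset (Finset ℕ)) : Finset (Finset ℕ) → Prop
  | refl : Reach P M₀ M₀
  | step {M : Finset (Finset ℕ)} {p q x : ℕ} {e : Finset ℕ}
      (h : Reach P M₀ M)
      (hp : p ∈ UC n M) (hq : q ∈ UC n M) (hpn : p ∉ P) (hqn : q ∉ P)
      (hge : ({p, q} : Finset ℕ) ∉ GE) (he : e ∈ M) (hx : x ∈ e)
      (hE : ({p, q, x} : Finset ℕ) ∈ E) :
      Reach P M₀ (swp p q x e M)

/-- All vertices uncovered in some reachable matching. -/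
noncomputable def RR (P : Finset ℕ) (M₀ : Finset (Finset ℕ)) : Finset ℕ :=
  (Finset.Icc 1 n).filter (fun v => ∃ M, Reach n E GE P M₀ M ∧ v ∈ UC n M)

end Reach

section ReachLemmas

variable {n : ℕ} {E GE : Finset (Finset ℕ)}

lemma reach_inv (h3 : IsThreeGraph n E) {P : Finset ℕ} {M₀ M : Finset (Finset ℕ)}
    (hM₀ : IsM E M₀) (hP : P ⊆ UC n M₀) (h : Reach n E GE P M₀ M) :
    IsM E M ∧ M.card = M₀.card ∧ P ⊆ UC n M := by
  induction h with
  | refl => exact ⟨hM₀, rfl, hP⟩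
  | @step M p q x e h hp hq hpn hqn hge he hx hE ih =>
    obtain ⟨hIsM, hcard, hPM⟩ := ih
    obtain ⟨hIsM', hcard', hcov'⟩ := swap_props h3 hIsM he hx hp hq hE
    refine ⟨hIsM', by omega, ?_⟩
    intro v hv
    rw [swap_UC h3 hIsM he hx hp hq hE]
    left
    exact ⟨hPM hv, fun hvp => hpn (hvp ▸ hv), fun hvq => hqn (hvq ▸ hv)⟩

lemma reach_trans {P : Finset ℕ} {M₀ M₁ M : Finset (Finset ℕ)}
    (h1 : Reach n E GE P M₀ M₁) (h2 : Reach n E GE P M₁ M) : Reach n E GE P M₀ M := by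
  induction h2 with
  | refl => exact h1
  | step h hp hq hpn hqn hge he hx hE ih =>
    exact Reach.step ih hp hq hpn hqn hge he hx hE

lemma reach_mono {P P' : Finset ℕ} {M₀ M : Finset (Finset ℕ)} (hPP : P ⊆ P')
    (h : Reach n E GE P' M₀ M) : Reach n E GE P M₀ M := by
  induction h with
  | refl => exact Reach.refl
  | step h hp hq hpn hqn hge he hx hE ih =>
    exact Reach.step ih hp hq (fun hc => hpn (hPP hc)) (fun hc => hqn (hPP hc)) hge he hx hE

lemma mem_RR {P : Finset ℕ} {M₀ M : Finset (Finset ℕ)} {v : ℕ}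
    (h : Reach n E GE P M₀ M) (hv : v ∈ UC n M) : v ∈ RR n E GE P M₀ := by
  rw [RR, mem_filter]
  exact ⟨UC_sub_Icc hv, M, h, hv⟩

lemma RR_sub_Icc {P : Finset ℕ} {M₀ : Finset (Finset ℕ)} :
    RR n E GE P M₀ ⊆ Finset.Icc 1 n := filter_subset _ _

/-- RR is monotone: a deeper closure is contained in a shallower one. -/
lemma RR_mono {P P' : Finset ℕ} {M₀ M₁ : Finset (Finset ℕ)} (hPP : P ⊆ P')
    (h1 : Reach n E GE P M₀ M₁) :
    RR n E GE P' M₁ ⊆ RR n E GE P M₀ := by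
  intro v hv
  rw [RR, mem_filter] at hv
  obtain ⟨hvI, M, hM, hvM⟩ := hv
  exact mem_RR (reach_trans h1 (reach_mono hPP hM)) hvM

end ReachLemmas

section Augment

variable {n : ℕ} {E GE : Finset (Finset ℕ)} {m : ℕ}

/-- Adding a fully-uncovered edge to a maximum matching is impossible. -/
lemma extend1 (h3 : IsThreeGraph n E)
    (hmax : ∀ M', IsM E M' → M'.card ≤ m)
    {M : Finset (Finset ℕ)} (hM : IsM E M) (hMc : M.card = m)
    {g : Finset ℕ} (hg : g ∈ E) (hgU : g ⊆ UC n M) : False := by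
  have hgM : g ∉ M := by
    intro hgM
    have hcard := (h3 g hg).1
    have : ∃ v, v ∈ g := card_pos.1 (by omega)
    obtain ⟨v, hv⟩ := this
    exact (mem_UC.1 (hgU hv)).2 (edge_sub_cov hgM hv)
  have hIsM : IsM E (insert g M) := by
    constructor
    · intro f hf
      rcases mem_insert.1 hf with rfl | hf'
      · exact hg
      · exact hM.1 hf'
    · intro f hf f' hf' hff
      have key : ∀ f'' ∈ M, Disjoint g f'' := by
        intro f'' hf''
        rw [Finset.disjoint_left]
        intro a ha haf
        exact (mem_UC.1 (hgU ha)).2 (edge_sub_cov hf'' haf)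
      rcases mem_insert.1 hf with rfl | hf1 <;> rcases mem_insert.1 hf' with rfl | hf2
      · exact absurd rfl hff
      · exact key f' hf2
      · exact (key f hf1).symm
      · exact hM.2 f hf1 f' hf2 hff
  have := hmax _ hIsM
  rw [card_insert_of_notMem hgM, hMc] at this
  omega

/-- The two-for-one augmenting swap is impossible. -/
lemma extend2 (h3 : IsThreeGraph n E)
    (hmax : ∀ M', IsM E M' → M'.card ≤ m)
    {M : Finset (Finset ℕ)} (hM : IsM E M) (hMc : M.card = m)
    {a b c d x y : ℕ} {e : Finset ℕ} (he : e ∈ M) (hx : x ∈ e) (hy : y ∈ e) (hxy : x ≠ y)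
    (ha : a ∈ UC n M) (hb : b ∈ UC n M) (hc : c ∈ UC n M) (hd : d ∈ UC n M)
    (hab : a ≠ b) (hcd : c ≠ d) (hac : a ≠ c) (had : a ≠ d) (hbc : b ≠ c) (hbd : b ≠ d)
    (hE1 : ({a, b, x} : Finset ℕ) ∈ E) (hE2 : ({c, d, y} : Finset ℕ) ∈ E) : False := by
  -- first swap e for {c,d,y}, then a,b are still uncovered and {a,b,x} is fully uncovered
  have hM1 := swap_props h3 hM he hy hc hd hE2
  set M1 := swp c d y e M with hM1def
  have hxM1 : x ∈ UC n M1 := by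
    rw [swap_UC h3 hM he hy hc hd hE2]
    exact Or.inr ⟨hx, hxy⟩
  have haM1 : a ∈ UC n M1 := by
    rw [swap_UC h3 hM he hy hc hd hE2]
    exact Or.inl ⟨ha, hac, had⟩
  have hbM1 : b ∈ UC n M1 := by
    rw [swap_UC h3 hM he hy hc hd hE2]
    exact Or.inl ⟨hb, hbc, hbd⟩
  apply extend1 h3 hmax hM1.1 (hM1.2.1.trans hMc) hE1
  intro v hv
  simp only [mem_insert, mem_singleton] at hv
  rcases hv with rfl | rfl | rfl
  · exact haM1
  · exact hbM1
  · exact hxM1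

end Augment

section GEbits

variable {n : ℕ} {GE : Finset (Finset ℕ)} {β : ℝ}

/-- GE-neighbourhood of a vertex. -/
def NGE (n : ℕ) (GE : Finset (Finset ℕ)) (r : ℕ) : Finset ℕ :=
  (Finset.Icc 1 n).filter (fun w => ({r, w} : Finset ℕ) ∈ GE)

lemma card_NGE (hGE2 : ∀ e ∈ GE, e.card = 2 ∧ e ⊆ Finset.Icc 1 n)
    (hdeg : ∀ v ∈ Finset.Icc 1 n, (((GE.filter fun e => v ∈ e).card : ℝ)) ≤ β * n)
    {r : ℕ} (hr : r ∈ Finset.Icc 1 n) :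
    ((NGE n GE r).card : ℝ) ≤ β * n := by
  have hinj : ∀ w ∈ NGE n GE r, ({r, w} : Finset ℕ) ∈ GE.filter (fun e => r ∈ e) := by
    intro w hw
    rw [NGE, mem_filter] at hw
    rw [mem_filter]
    exact ⟨hw.2, by simp⟩
  have hcard : (NGE n GE r).card ≤ (GE.filter (fun e => r ∈ e)).card := by
    apply card_le_card_of_injOn (fun w => ({r, w} : Finset ℕ)) hinj
    intro w hw w' hw' heq
    have heq' : ({r, w} : Finset ℕ) = {r, w'} := heq
    have h1 : w ∈ ({r, w'} : Finset ℕ) := by rw [← heq']; simp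
    have h2 : w' ∈ ({r, w} : Finset ℕ) := by rw [heq']; simp
    simp only [mem_insert, mem_singleton] at h1 h2
    rcases h1 with rfl | h1
    · rcases h2 with h2 | h2 <;> omega
    · exact h1
  calc ((NGE n GE r).card : ℝ) ≤ ((GE.filter (fun e => r ∈ e)).card : ℝ) := by exact_mod_cast hcard
    _ ≤ β * n := hdeg r hr

lemma pair_exists (hGE2 : ∀ e ∈ GE, e.card = 2 ∧ e ⊆ Finset.Icc 1 n)
    (hdeg : ∀ v ∈ Finset.Icc 1 n, (((GE.filter fun e => v ∈ e).card : ℝ)) ≤ β * n)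
    (hb : (0:ℝ) ≤ β * n)
    {W : Finset ℕ} (hW : W ⊆ Finset.Icc 1 n) (hWc : β * n + 1 < (W.card : ℝ)) :
    ∃ p ∈ W, ∃ q ∈ W, p ≠ q ∧ ({p, q} : Finset ℕ) ∉ GE := by
  have hne : W.Nonempty := by
    rw [← card_pos]
    by_contra h
    push_neg at h
    have : W.card = 0 := by omega
    rw [this] at hWc
    norm_num at hWc
    linarith
  obtain ⟨p, hp⟩ := hne
  have hQ : (0:ℝ) < ((W \ insert p (NGE n GE p)).card : ℝ) := by
    have h1 : (W \ insert p (NGE n GE p)).card ≥ W.card - (1 + (NGE n GE p).card) := by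
      have := le_card_sdiff (insert p (NGE n GE p)) W
      have h2 : (insert p (NGE n GE p)).card ≤ 1 + (NGE n GE p).card := by
        apply (card_insert_le _ _).trans
        omega
      omega
    have h2 : ((NGE n GE p).card : ℝ) ≤ β * n := card_NGE hGE2 hdeg (hW hp)
    have h3 : (W.card : ℝ) - (1 + (NGE n GE p).card) ≤ ((W \ insert p (NGE n GE p)).card : ℝ) := by
      by_cases hc : W.card ≥ 1 + (NGE n GE p).card
      · have := h1
        push_cast
        have hcast : ((W.card - (1 + (NGE n GE p).card) : ℕ) : ℝ)
            = (W.card : ℝ) - (1 + (NGE n GE p).card) := by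
          push_cast [Nat.cast_sub hc]
          ring
        calc (W.card : ℝ) - (1 + (NGE n GE p).card) = ((W.card - (1 + (NGE n GE p).card) : ℕ) : ℝ) := hcast.symm
          _ ≤ _ := by exact_mod_cast h1
      · push_neg at hc
        have : (W.card : ℝ) < 1 + (NGE n GE p).card := by exact_mod_cast hc
        have h0 : (0:ℝ) ≤ ((W \ insert p (NGE n GE p)).card : ℝ) := by positivity
        linarith
    linarith
  have : (W \ insert p (NGE n GE p)).Nonempty := by
    rw [← card_pos]
    exact_mod_cast hQ
  obtain ⟨q, hq⟩ := this
  rw [mem_sdiff, mem_insert] at hq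
  push_neg at hq
  obtain ⟨hqW, hqp, hqN⟩ := hq
  refine ⟨p, hp, q, hqW, fun h => hqp h.symm, ?_⟩
  intro hge
  apply hqN
  rw [NGE, mem_filter]
  exact ⟨hW hqW, hge⟩

end GEbits

section Key

variable {n : ℕ} {E GE : Finset (Finset ℕ)} {m : ℕ}

lemma key_count (h3 : IsThreeGraph n E) (hmax : ∀ M', IsM E M' → M'.card ≤ m)
    {P : Finset ℕ} {M₀ M : Finset (Finset ℕ)}
    (hM₀ : IsM E M₀) (hM₀c : M₀.card = m) (hP : P ⊆ UC n M₀)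
    (hreach : Reach n E GE P M₀ M)
    {p q : ℕ} (hp : p ∈ UC n M) (hq : q ∈ UC n M) (hpn : p ∉ P) (hqn : q ∉ P)
    (hge : ({p, q} : Finset ℕ) ∉ GE) :
    pairDeg n E p q + (UC n M).card ≤ (RR n E GE P M₀).card := by
  obtain ⟨hMisM, hMc, hPM⟩ := reach_inv h3 hM₀ hP hreach
  set R := RR n E GE P M₀ with hRdef
  set L := (Finset.Icc 1 n).filter (fun x => ({p, q, x} : Finset ℕ) ∈ E) with hLdef
  have hdL : pairDeg n E p q = L.card := rfl
  -- L is inside the covered set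
  have hLcov : L ⊆ cov M := by
    intro x hx
    rw [hLdef, mem_filter] at hx
    by_contra hxc
    have hxU : x ∈ UC n M := mem_UC.2 ⟨hx.1, hxc⟩
    apply extend1 h3 hmax hMisM (hMc.trans hM₀c) hx.2
    intro v hv
    simp only [mem_insert, mem_singleton] at hv
    rcases hv with rfl | rfl | rfl
    · exact hp
    · exact hq
    · exact hxU
  -- companions of slots are in R
  have hcomp : ∀ e ∈ M, ∀ x ∈ L ∩ e, ∀ v ∈ e, v ≠ x → v ∈ R := by
    intro e he x hx v hv hvx
    rw [mem_inter, hLdef, mem_filter] at hx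
    obtain ⟨⟨hxI, hxE⟩, hxe⟩ := hx
    have hstep : Reach n E GE P M₀ (swp p q x e M) :=
      Reach.step hreach hp hq hpn hqn hge he hxe hxE
    apply mem_RR hstep
    rw [swap_UC h3 hMisM he hxe hp hq hxE]
    exact Or.inr ⟨hv, hvx⟩
  -- per-edge counting
  have hperedge : ∀ e ∈ M, (L ∩ e).card ≤ (R ∩ e).card := by
    intro e he
    by_cases h0 : (L ∩ e).card = 0
    · omega
    · have hecard : e.card = 3 := (h3 e (hMisM.1 he)).1
      by_cases h1 : (L ∩ e).card = 1
      · obtain ⟨x, hx⟩ := card_eq_one.1 h1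
        have hxe : x ∈ e := by
          have : x ∈ L ∩ e := hx ▸ (by simp : x ∈ ({x} : Finset ℕ))
          exact (mem_inter.1 this).2
        have hxL : x ∈ L ∩ e := hx ▸ (by simp : x ∈ ({x} : Finset ℕ))
        have hsub : e \ {x} ⊆ R ∩ e := by
          intro v hv
          rw [mem_sdiff, mem_singleton] at hv
          exact mem_inter.2 ⟨hcomp e he x hxL v hv.1 hv.2, hv.1⟩
        have : (e \ {x}).card = 2 := by
          rw [card_sdiff_of_subset (by simpa using hxe)]
          simp [hecard]
        have := card_le_card hsub
        omega
      · -- at least two slots: all of e is in R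
        have h2 : 2 ≤ (L ∩ e).card := by omega
        have hsub : e ⊆ R ∩ e := by
          intro v hv
          refine mem_inter.2 ⟨?_, hv⟩
          obtain ⟨x, hx, y, hy, hxy⟩ := one_lt_card.1 h2
          by_cases hvx : v = x
          · subst hvx
            exact hcomp e he y hy v hv hxy
          · exact hcomp e he x hx v hv hvx
        have := card_le_card hsub
        have hle : (L ∩ e).card ≤ e.card := card_le_card inter_subset_right
        omega
  -- sum decomposition
  have hpair : ∀ (S : Finset ℕ), S ⊆ cov M → S.card = ∑ e ∈ M, (S ∩ e).card := by
    intro S hS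
    have hSeq : S = M.biUnion (fun e => S ∩ e) := by
      ext v
      simp only [mem_biUnion, mem_inter]
      constructor
      · intro hv
        obtain ⟨e, he, hve⟩ := mem_cov.1 (hS hv)
        exact ⟨e, he, hv, hve⟩
      · rintro ⟨e, he, hv, hve⟩
        exact hv
    have hbu : (M.biUnion (fun e => S ∩ e)).card = ∑ e ∈ M, (S ∩ e).card := by
      apply card_biUnion
      intro e he f hf hef
      exact (hMisM.2 e he f hf hef).mono inter_subset_right inter_subset_right
    rw [← hbu, ← hSeq]
  have hLsum : L.card = ∑ e ∈ M, (L ∩ e).card := hpair L hLcov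
  have hRsum : (R ∩ cov M).card = ∑ e ∈ M, ((R ∩ cov M) ∩ e).card :=
    hpair _ inter_subset_right
  have heqe : ∀ e ∈ M, (R ∩ cov M) ∩ e = R ∩ e := by
    intro e he
    ext v
    simp only [mem_inter]
    constructor
    · rintro ⟨⟨h1, h2⟩, h3⟩; exact ⟨h1, h3⟩
    · rintro ⟨h1, h3⟩; exact ⟨⟨h1, edge_sub_cov he h3⟩, h3⟩
  have h1 : L.card ≤ (R ∩ cov M).card := by
    rw [hLsum, hRsum]
    apply Finset.sum_le_sum
    intro e he
    rw [heqe e he]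
    exact hperedge e he
  have hUCR : UC n M ⊆ R := fun v hv => mem_RR hreach hv
  have hdisj : Disjoint (R ∩ cov M) (UC n M) := by
    rw [Finset.disjoint_left]
    intro v hv hvU
    exact (mem_UC.1 hvU).2 (mem_inter.1 hv).2
  have hsub2 : (R ∩ cov M) ∪ UC n M ⊆ R := union_subset inter_subset_left hUCR
  have h2 : (R ∩ cov M).card + (UC n M).card ≤ R.card := by
    rw [← card_union_of_disjoint hdisj]
    exact card_le_card hsub2
  omega

end Key

section Final

variable {n : ℕ} {E GE : Finset (Finset ℕ)} {m : ℕ}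

lemma sum_decomp (hM : IsM E M) {S : Finset ℕ} (hS : S ⊆ cov M) :
    S.card = ∑ e ∈ M, (S ∩ e).card := by
  have hSeq : S = M.biUnion (fun e => S ∩ e) := by
    ext v
    simp only [mem_biUnion, mem_inter]
    constructor
    · intro hv
      obtain ⟨e, he, hve⟩ := mem_cov.1 (hS hv)
      exact ⟨e, he, hv, hve⟩
    · rintro ⟨e, he, hv, hve⟩
      exact hv
  have hbu : (M.biUnion (fun e => S ∩ e)).card = ∑ e ∈ M, (S ∩ e).card := by
    apply card_biUnion
    intro e he f hf hef
    exact (hM.2 e he f hf hef).mono inter_subset_right inter_subset_right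
  rw [← hbu, ← hSeq]

lemma final4 {α : ℝ} (h3 : IsThreeGraph n E) (hmax : ∀ M', IsM E M' → M'.card ≤ m)
    (hdeg : ∀ i ∈ Finset.Icc 1 n, ∀ j ∈ Finset.Icc 1 n, i ≠ j →
        ({i, j} : Finset ℕ) ∉ GE →
        min (min (i : ℝ) (j : ℝ)) ((n : ℝ) / 2) + α * n ≤ (pairDeg n E i j : ℝ))
    (han : (0:ℝ) < α * n)
    {M : Finset (Finset ℕ)} (hM : IsM E M) (hMc : M.card = m)
    {a b c d : ℕ} (haU : a ∈ UC n M) (hbU : b ∈ UC n M) (hcU : c ∈ UC n M)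
    (hdU : d ∈ UC n M)
    (hab : a ≠ b) (hcd : c ≠ d) (hac : a ≠ c) (had : a ≠ d) (hbc : b ≠ c) (hbd : b ≠ d)
    (hgab : ({a, b} : Finset ℕ) ∉ GE) (hgcd : ({c, d} : Finset ℕ) ∉ GE)
    (hHa : (n:ℝ)/2 - α * n/2 < a) (hHb : (n:ℝ)/2 - α * n/2 < b)
    (hHc : (n:ℝ)/2 - α * n/2 < c) (hHd : (n:ℝ)/2 - α * n/2 < d) : False := by
  set L1 := (Finset.Icc 1 n).filter (fun x => ({a, b, x} : Finset ℕ) ∈ E) with hL1def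
  set L2 := (Finset.Icc 1 n).filter (fun x => ({c, d, x} : Finset ℕ) ∈ E) with hL2def
  have hL1cov : L1 ⊆ cov M := by
    intro x hx
    rw [hL1def, mem_filter] at hx
    by_contra hxc
    apply extend1 h3 hmax hM hMc hx.2
    intro v hv
    simp only [mem_insert, mem_singleton] at hv
    rcases hv with rfl | rfl | rfl
    · exact haU
    · exact hbU
    · exact mem_UC.2 ⟨hx.1, hxc⟩
  have hL2cov : L2 ⊆ cov M := by
    intro x hx
    rw [hL2def, mem_filter] at hx
    by_contra hxc
    apply extend1 h3 hmax hM hMc hx.2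
    intro v hv
    simp only [mem_insert, mem_singleton] at hv
    rcases hv with rfl | rfl | rfl
    · exact hcU
    · exact hdU
    · exact mem_UC.2 ⟨hx.1, hxc⟩
  have hperedge : ∀ e ∈ M, (L1 ∩ e).card + (L2 ∩ e).card ≤ 3 := by
    intro e he
    have hall : ∀ x ∈ L1 ∩ e, ∀ y ∈ L2 ∩ e, x = y := by
      intro x hx y hy
      by_contra hxy
      rw [mem_inter, hL1def, mem_filter] at hx
      rw [mem_inter, hL2def, mem_filter] at hy
      exact extend2 h3 hmax hM hMc he hx.2 hy.2 hxy haU hbU hcU hdU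
        hab hcd hac had hbc hbd hx.1.2 hy.1.2
    have hecard : e.card = 3 := (h3 e (hM.1 he)).1
    by_cases h1 : (L1 ∩ e).card ≤ 1
    · by_cases h2 : (L2 ∩ e).card ≤ 1
      · omega
      · -- L2∩e ≥ 2 : show L1∩e empty
        push_neg at h2
        have hL1e : (L1 ∩ e) = ∅ := by
          by_contra hne
          obtain ⟨x, hx⟩ := nonempty_of_ne_empty hne
          obtain ⟨y, hy, y', hy', hyy⟩ := one_lt_card.1 h2
          exact hyy ((hall x hx y hy).symm.trans (hall x hx y' hy'))
        rw [hL1e, card_empty]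
        have : (L2 ∩ e).card ≤ e.card := card_le_card inter_subset_right
        omega
    · push_neg at h1
      have hL2e : (L2 ∩ e) = ∅ := by
        by_contra hne
        obtain ⟨y, hy⟩ := nonempty_of_ne_empty hne
        obtain ⟨x, hx, x', hx', hxx⟩ := one_lt_card.1 h1
        exact hxx ((hall x hx y hy).trans (hall x' hx' y hy).symm)
      rw [hL2e, card_empty]
      have : (L1 ∩ e).card ≤ e.card := card_le_card inter_subset_right
      omega
  have hsum : pairDeg n E a b + pairDeg n E c d ≤ 3 * M.card := by
    have e1 : pairDeg n E a b = ∑ e ∈ M, (L1 ∩ e).card := sum_decomp hM hL1cov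
    have e2 : pairDeg n E c d = ∑ e ∈ M, (L2 ∩ e).card := sum_decomp hM hL2cov
    rw [e1, e2, ← Finset.sum_add_distrib]
    calc ∑ e ∈ M, ((L1 ∩ e).card + (L2 ∩ e).card) ≤ ∑ e ∈ M, 3 :=
          Finset.sum_le_sum hperedge
      _ = 3 * M.card := by rw [Finset.sum_const, smul_eq_mul, mul_comm]
  -- degree lower bounds
  have haI : a ∈ Finset.Icc 1 n := UC_sub_Icc haU
  have hbI : b ∈ Finset.Icc 1 n := UC_sub_Icc hbU
  have hcI : c ∈ Finset.Icc 1 n := UC_sub_Icc hcU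
  have hdI : d ∈ Finset.Icc 1 n := UC_sub_Icc hdU
  have hd1 := hdeg a haI b hbI hab hgab
  have hd2 := hdeg c hcI d hdI hcd hgcd
  have hmin1 : (n:ℝ)/2 - α * n/2 ≤ min (min (a : ℝ) (b : ℝ)) ((n : ℝ) / 2) := by
    have h1 : (n:ℝ)/2 - α * n/2 ≤ min (a:ℝ) (b:ℝ) := le_min hHa.le hHb.le
    have h2 : (n:ℝ)/2 - α * n/2 ≤ (n:ℝ)/2 := by linarith
    exact le_min h1 h2
  have hmin2 : (n:ℝ)/2 - α * n/2 ≤ min (min (c : ℝ) (d : ℝ)) ((n : ℝ) / 2) := by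
    have h1 : (n:ℝ)/2 - α * n/2 ≤ min (c:ℝ) (d:ℝ) := le_min hHc.le hHd.le
    have h2 : (n:ℝ)/2 - α * n/2 ≤ (n:ℝ)/2 := by linarith
    exact le_min h1 h2
  have h3m : 3 * M.card ≤ n := three_le_n_card h3 hM
  have hfin : (pairDeg n E a b : ℝ) + (pairDeg n E c d : ℝ) ≤ (n:ℝ) := by
    have hc1 : ((pairDeg n E a b + pairDeg n E c d : ℕ) : ℝ) ≤ ((3 * M.card : ℕ) : ℝ) := by
      exact_mod_cast hsum
    have hc2 : ((3 * M.card : ℕ) : ℝ) ≤ (n : ℝ) := by exact_mod_cast h3m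
    push_cast at hc1 hc2
    linarith
  linarith [hd1, hd2, hmin1, hmin2, hfin, han]

end Final

section KeyReal

variable {n : ℕ} {E GE : Finset (Finset ℕ)} {m : ℕ} {α β : ℝ}

lemma key_real (h3 : IsThreeGraph n E) (hmax : ∀ M', IsM E M' → M'.card ≤ m)
    (hdeg : ∀ i ∈ Finset.Icc 1 n, ∀ j ∈ Finset.Icc 1 n, i ≠ j →
        ({i, j} : Finset ℕ) ∉ GE →
        min (min (i : ℝ) (j : ℝ)) ((n : ℝ) / 2) + α * n ≤ (pairDeg n E i j : ℝ))
    {P : Finset ℕ} {M₀ M : Finset (Finset ℕ)}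
    (hM₀ : IsM E M₀) (hM₀c : M₀.card = m) (hP : P ⊆ UC n M₀)
    (hreach : Reach n E GE P M₀ M)
    {p q : ℕ} (hp : p ∈ UC n M) (hq : q ∈ UC n M) (hpn : p ∉ P) (hqn : q ∉ P)
    (hpq : p ≠ q) (hge : ({p, q} : Finset ℕ) ∉ GE) :
    min (min (p : ℝ) (q : ℝ)) ((n : ℝ) / 2) + α * n
      ≤ ((RR n E GE P M₀).card : ℝ) - ((n : ℝ) - 3 * m) := by
  have hkc := key_count h3 hmax hM₀ hM₀c hP hreach hp hq hpn hqn hge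
  obtain ⟨hMisM, hMc, _⟩ := reach_inv h3 hM₀ hP hreach
  have hUCc : (UC n M).card = n - 3 * m := by
    rw [card_UC h3 hMisM, hMc, hM₀c]
  have h3m : 3 * m ≤ n := by
    have := three_le_n_card h3 hMisM
    omega
  have hUCreal : ((UC n M).card : ℝ) = (n : ℝ) - 3 * m := by
    rw [hUCc]
    push_cast [Nat.cast_sub h3m]
    ring
  have hd := hdeg p (UC_sub_Icc hp) q (UC_sub_Icc hq) hpq hge
  have hkcr : (pairDeg n E p q : ℝ) + ((UC n M).card : ℝ) ≤ ((RR n E GE P M₀).card : ℝ) := by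
    exact_mod_cast hkc
  rw [hUCreal] at hkcr
  linarith

lemma card_filter_le_real {S : Finset ℕ} (hS : S ⊆ Finset.Icc 1 n) {D : ℝ} (hD : 0 ≤ D) :
    ((S.filter (fun v : ℕ => (v : ℝ) ≤ D)).card : ℝ) ≤ D := by
  have hsub : S.filter (fun v : ℕ => (v : ℝ) ≤ D) ⊆ Finset.Icc 1 (Nat.floor D) := by
    intro v hv
    rw [mem_filter] at hv
    have h1 := hS hv.1
    rw [Finset.mem_Icc] at h1 ⊢
    exact ⟨h1.1, Nat.le_floor hv.2⟩
  have := card_le_card hsub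
  rw [Nat.card_Icc] at this
  calc ((S.filter (fun v : ℕ => (v : ℝ) ≤ D)).card : ℝ) ≤ ((Nat.floor D + 1 - 1 : ℕ) : ℝ) := by
        exact_mod_cast this
    _ ≤ D := by
        simp only [Nat.add_sub_cancel]
        exact Nat.floor_le hD

/-- If the closure deficiency is negative we get a contradiction. -/
lemma dneg_contra (h3 : IsThreeGraph n E) (hmax : ∀ M', IsM E M' → M'.card ≤ m)
    (hdeg : ∀ i ∈ Finset.Icc 1 n, ∀ j ∈ Finset.Icc 1 n, i ≠ j →
        ({i, j} : Finset ℕ) ∉ GE →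
        min (min (i : ℝ) (j : ℝ)) ((n : ℝ) / 2) + α * n ≤ (pairDeg n E i j : ℝ))
    (hGE2 : ∀ e ∈ GE, e.card = 2 ∧ e ⊆ Finset.Icc 1 n)
    (hGEdeg : ∀ v ∈ Finset.Icc 1 n, (((GE.filter fun e => v ∈ e).card : ℝ)) ≤ β * n)
    (hb : (0:ℝ) ≤ β * n) (hn2 : (2:ℝ) ≤ (n:ℝ))
    {P : Finset ℕ} {M : Finset (Finset ℕ)}
    (hM : IsM E M) (hMc : M.card = m) (hP : P ⊆ UC n M)
    (havail : β * n + 1 < (((UC n M) \ P).card : ℝ))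
    (hD : ((RR n E GE P M).card : ℝ) - ((n : ℝ) - 3 * m) - α * n < 0) : False := by
  obtain ⟨p, hpW, q, hqW, hpq, hge⟩ :=
    pair_exists hGE2 hGEdeg hb (fun v hv => UC_sub_Icc (mem_sdiff.1 hv).1) havail
  rw [mem_sdiff] at hpW hqW
  have hkey := key_real h3 hmax hdeg hM hMc hP (Reach.refl)
    hpW.1 hqW.1 hpW.2 hqW.2 hpq hge
  have hp1 : (1:ℝ) ≤ (p:ℝ) := by
    have := (Finset.mem_Icc.1 (UC_sub_Icc hpW.1)).1
    exact_mod_cast this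
  have hq1 : (1:ℝ) ≤ (q:ℝ) := by
    have := (Finset.mem_Icc.1 (UC_sub_Icc hqW.1)).1
    exact_mod_cast this
  have hmin : (1:ℝ) ≤ min (min (p : ℝ) (q : ℝ)) ((n : ℝ) / 2) := by
    apply le_min (le_min hp1 hq1)
    linarith
  linarith

end KeyReal

end S9

set_option maxHeartbeats 2000000 in
open Finset S9 in
/-- **Matching Lemma.**  For all `α, β > 0` there is `n₀` such that the following
holds for `n ≥ n₀`.  Let `([n], E)` be a 3-graph and let `G_H` be a graph on `[n]`
(given by its edge set `GE` of 2-element subsets of `[n]`) with maximum degree at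
most `βn`.  If `d(i,j) ≥ min(i, j, n/2) + αn` for every pair of distinct vertices
`{i,j}` that is not an edge of `G_H`, then `H` has a matching `M` covering at least
`(1 − 3β)n` vertices (a matching with `3·|M| ≥ (1 − 3β)n`). -/
theorem stmt_9 (α β : ℝ) (hα : 0 < α) (hβ : 0 < β) :
    ∃ n₀ : ℕ, ∀ n : ℕ, n₀ ≤ n →
      ∀ E : Finset (Finset ℕ), IsThreeGraph n E →
      ∀ GE : Finset (Finset ℕ), (∀ e ∈ GE, e.card = 2 ∧ e ⊆ Finset.Icc 1 n) →
      (∀ v ∈ Finset.Icc 1 n, (((GE.filter fun e => v ∈ e).card : ℝ)) ≤ β * n) →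
      (∀ i ∈ Finset.Icc 1 n, ∀ j ∈ Finset.Icc 1 n, i ≠ j →
        ({i, j} : Finset ℕ) ∉ GE →
        min (min (i : ℝ) (j : ℝ)) ((n : ℝ) / 2) + α * n ≤ (pairDeg n E i j : ℝ)) →
      ∃ M : Finset (Finset ℕ), M ⊆ E ∧
        (∀ e ∈ M, ∀ f ∈ M, e ≠ f → Disjoint e f) ∧
        (1 - 3 * β) * n ≤ 3 * (M.card : ℝ) := by
  classical
  set a : ℝ := min α 1 with hadef
  have ha : 0 < a := lt_min hα one_pos
  have ha1 : a ≤ 1 := min_le_right _ _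
  set K : ℕ := Nat.ceil ((2:ℝ)/a) + 8 with hKdef
  refine ⟨Nat.ceil (((K:ℝ) + 2) * (1/β + 1/a)) + 2, ?_⟩
  intro n hn E h3 GE hGE2 hGEdeg hdeg0
  have hn0 : (0:ℝ) < (n:ℝ) := by
    have : (2:ℕ) ≤ n := le_trans (by omega) hn
    exact_mod_cast lt_of_lt_of_le (by norm_num) this
  have hn2 : (2:ℝ) ≤ (n:ℝ) := by
    have : (2:ℕ) ≤ n := le_trans (by omega) hn
    exact_mod_cast this
  have hnreal : ((K:ℝ) + 2) * (1/β + 1/a) ≤ (n:ℝ) := by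
    calc ((K:ℝ) + 2) * (1/β + 1/a) ≤ (Nat.ceil (((K:ℝ) + 2) * (1/β + 1/a)) : ℝ) := Nat.le_ceil _
      _ ≤ (n:ℝ) := by
        have : Nat.ceil (((K:ℝ) + 2) * (1/β + 1/a)) ≤ n := by omega
        exact_mod_cast this
  have hK0 : (0:ℝ) ≤ (K:ℝ) := Nat.cast_nonneg K
  have hC1 : (K:ℝ) + 2 ≤ β * n := by
    have h1 : ((K:ℝ) + 2) * (1/β) ≤ (n:ℝ) := by
      have h2 : (0:ℝ) ≤ ((K:ℝ) + 2) * (1/a) := by positivity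
      nlinarith
    calc (K:ℝ) + 2 = (((K:ℝ) + 2) * (1/β)) * β := by field_simp
      _ ≤ (n:ℝ) * β := by
          apply mul_le_mul_of_nonneg_right h1 hβ.le
      _ = β * n := by ring
  have hC2 : (K:ℝ) + 2 ≤ a * n := by
    have h1 : ((K:ℝ) + 2) * (1/a) ≤ (n:ℝ) := by
      have h2 : (0:ℝ) ≤ ((K:ℝ) + 2) * (1/β) := by positivity
      nlinarith
    calc (K:ℝ) + 2 = (((K:ℝ) + 2) * (1/a)) * a := by field_simp
      _ ≤ (n:ℝ) * a := mul_le_mul_of_nonneg_right h1 ha.le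
      _ = a * n := by ring
  have hb : (0:ℝ) ≤ β * n := by positivity
  have han : (0:ℝ) < a * n := by positivity
  have hdeg : ∀ i ∈ Finset.Icc 1 n, ∀ j ∈ Finset.Icc 1 n, i ≠ j →
      ({i, j} : Finset ℕ) ∉ GE →
      min (min (i : ℝ) (j : ℝ)) ((n : ℝ) / 2) + a * n ≤ (pairDeg n E i j : ℝ) := by
    intro i hi j hj hij hge
    have h1 := hdeg0 i hi j hj hij hge
    have h2 : a * n ≤ α * n :=
      mul_le_mul_of_nonneg_right (min_le_left _ _) (le_of_lt hn0)
    linarith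
  by_contra hcon
  push_neg at hcon
  -- maximum matching
  have hSne : (E.powerset.filter (fun M => IsM E M)).Nonempty := by
    refine ⟨∅, ?_⟩
    rw [mem_filter, mem_powerset]
    exact ⟨empty_subset _, empty_subset _, fun e he => absurd he (notMem_empty e)⟩
  obtain ⟨M₀, hM₀S, hM₀max⟩ := Finset.exists_max_image _ Finset.card hSne
  set m := M₀.card with hmdef
  have hM₀ : IsM E M₀ := (mem_filter.1 hM₀S).2
  have hmax : ∀ M', IsM E M' → M'.card ≤ m := by
    intro M' h
    exact hM₀max M' (mem_filter.2 ⟨mem_powerset.2 h.1, h⟩)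
  have h3m : 3 * m ≤ n := three_le_n_card h3 hM₀
  have hM₀lt : 3 * ((m : ℕ) : ℝ) < (1 - 3*β) * n := hcon M₀ hM₀.1 hM₀.2
  set u : ℝ := (n:ℝ) - 3*(m:ℝ) with hudef
  have hu3 : 3 * (β*n) < u := by
    rw [hudef]; nlinarith [hM₀lt]
  have hu0 : (0:ℝ) ≤ u := by
    rw [hudef]
    have : ((3*m : ℕ) : ℝ) ≤ (n:ℝ) := by exact_mod_cast h3m
    push_cast at this
    linarith
  set HighP : ℕ → Prop := fun v => (n:ℝ)/2 - a*n/2 < (v:ℝ) with hHighdef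
  -- availability of non-GE pairs outside the protected set, in any reachable matching
  have havail : ∀ (P : Finset ℕ) (M : Finset (Finset ℕ)), IsM E M → M.card = m →
      P.card ≤ K → β * n + 1 < (((UC n M) \ P).card : ℝ) := by
    intro P M hM hMc hPK
    have h1 : (UC n M).card = n - 3*m := by
      rw [card_UC h3 hM, hMc]
    have h2 : (UC n M).card ≤ ((UC n M) \ P).card + P.card := card_le_card_sdiff_add_card
    have h3' : ((UC n M).card : ℝ) = u := by
      rw [h1, hudef]
      push_cast [Nat.cast_sub h3m]
      ring
    have h4 : ((UC n M).card : ℝ) ≤ (((UC n M) \ P).card : ℝ) + ((P.card : ℕ) : ℝ) := by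
      exact_mod_cast h2
    have h5 : ((P.card : ℕ) : ℝ) ≤ (K:ℝ) := by exact_mod_cast hPK
    -- u − K > βn + 1  ⟸  2βn ≥ K + 2  (hC1) and u > 3βn
    have : β*n + 1 < u - (K:ℝ) := by linarith [hu3, hC1]
    linarith [h3', h4, h5, this]
  -- The main inductive construction
  have main : ∀ k : ℕ, k ≤ K → ∃ P M, IsM E M ∧ M.card = m ∧ P ⊆ UC n M ∧ P.card = k ∧
      (∀ p ∈ P.filter HighP, ∀ q ∈ P.filter HighP, p ≠ q → ({p,q} : Finset ℕ) ∉ GE) ∧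
      (P.filter HighP).card ≤ 3 ∧
      ((RR n E GE P M).card : ℝ) ≤ (n:ℝ) - ((k:ℝ) - ((P.filter HighP).card : ℝ)) * (a*n/2) := by
    intro k
    induction k with
    | zero =>
      intro _
      refine ⟨∅, M₀, hM₀, rfl, empty_subset _, card_empty, ?_, ?_, ?_⟩
      · intro p hp; simp at hp
      · simp
      · have hRn : (RR n E GE ∅ M₀).card ≤ n := by
          have := card_le_card (RR_sub_Icc (n := n) (E := E) (GE := GE) (P := ∅) (M₀ := M₀))
          rw [Nat.card_Icc] at this
          omega
        have : ((RR n E GE ∅ M₀).card : ℝ) ≤ (n:ℝ) := by exact_mod_cast hRn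
        simp only [filter_empty, card_empty, Nat.cast_zero]
        calc ((RR n E GE ∅ M₀).card : ℝ) ≤ (n:ℝ) := this
          _ ≤ (n:ℝ) - ((0:ℝ) - 0) * (a*n/2) := by ring_nf; exact le_refl _
    | succ k ih =>
      intro hk1
      obtain ⟨P, M, hM, hMc, hP, hPc, hPpair, hPHc, hRbound⟩ := ih (by omega)
      have hkK : (k:ℝ) ≤ (K:ℝ) := by exact_mod_cast (by omega : k ≤ K)
      set R := RR n E GE P M with hRdef
      set c := (P.filter HighP).card with hcdef
      have hcr3 : ((c:ℕ):ℝ) ≤ 3 := by exact_mod_cast hPHc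
      set D : ℝ := (R.card : ℝ) - ((n:ℝ) - 3*(m:ℝ)) - a*n with hDdef
      have hRcard : (R.card : ℝ) = D + u + a*n := by rw [hDdef, hudef]; ring
      by_cases hDneg : D < 0
      · exfalso
        refine dneg_contra h3 hmax hdeg hGE2 hGEdeg hb hn2 hM hMc hP
          (havail P M hM hMc (by omega)) ?_
        rw [← hRdef]
        linarith [hDneg]
      push_neg at hDneg
      set D' : ℝ := min D ((n:ℝ)/2 - a*n/2) with hD'def
      have hhalf : (0:ℝ) ≤ (n:ℝ)/2 - a*n/2 := by nlinarith
      have hD'0 : 0 ≤ D' := le_min hDneg hhalf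
      have hD'D : D' ≤ D := min_le_left _ _
      -- The selection set is nonempty
      set Bad : Finset ℕ := P ∪ (P.filter HighP).biUnion (fun h => NGE n GE h) with hBaddef
      have hBadcard : ((Bad.card : ℕ) : ℝ) ≤ (k:ℝ) + 3*(β*n) := by
        have h1 : Bad.card ≤ P.card + ((P.filter HighP).biUnion (fun h => NGE n GE h)).card :=
          card_union_le _ _
        have h2 : ((P.filter HighP).biUnion (fun h => NGE n GE h)).card ≤
            ∑ h ∈ P.filter HighP, (NGE n GE h).card := card_biUnion_le
        have h3'' : (∑ h ∈ P.filter HighP, ((NGE n GE h).card : ℝ)) ≤ (c:ℝ) * (β*n) := by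
          calc (∑ h ∈ P.filter HighP, ((NGE n GE h).card : ℝ))
              ≤ ∑ _h ∈ P.filter HighP, β*n :=
                Finset.sum_le_sum
                  (fun h hh => card_NGE hGE2 hGEdeg (UC_sub_Icc (hP (mem_filter.1 hh).1)))
            _ = (c:ℝ) * (β*n) := by
                rw [Finset.sum_const, hcdef, nsmul_eq_mul]
        have hb2 : Bad.card ≤ k + ∑ h ∈ P.filter HighP, (NGE n GE h).card := by
          refine le_trans h1 ?_
          rw [hPc]
          exact Nat.add_le_add_left h2 k
        have hb3 : ((Bad.card:ℕ):ℝ) ≤ (k:ℝ) + ∑ h ∈ P.filter HighP, ((NGE n GE h).card : ℝ) := by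
          calc ((Bad.card:ℕ):ℝ)
              ≤ ((k + ∑ h ∈ P.filter HighP, (NGE n GE h).card : ℕ) : ℝ) := by exact_mod_cast hb2
            _ = (k:ℝ) + ∑ h ∈ P.filter HighP, ((NGE n GE h).card : ℝ) := by push_cast; ring
        have h5 : (c:ℝ)*(β*n) ≤ 3*(β*n) := by nlinarith [hcr3, hb]
        linarith [h3'', hb3, h5]
      set T : Finset ℕ := (R.filter (fun v : ℕ => D' < (v:ℝ))) \ Bad with hTdef
      have hTne : T.Nonempty := by
        rw [← card_pos]
        by_contra hzero
        push_neg at hzero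
        have hT0 : (T.card : ℝ) = 0 := by
          have : T.card = 0 := by omega
          rw [this]; norm_num
        have hsp := Finset.card_filter_add_card_filter_not
          (s := R) (p := fun v : ℕ => (v:ℝ) ≤ D')
        have hcompl : R.filter (fun v : ℕ => ¬ ((v:ℝ) ≤ D')) = R.filter (fun v : ℕ => D' < (v:ℝ)) := by
          apply filter_congr
          intro v hv
          simp [not_le]
        have hle : ((R.filter (fun v : ℕ => (v:ℝ) ≤ D')).card : ℝ) ≤ D' :=
          card_filter_le_real (RR_sub_Icc) hD'0
        have hgt : ((R.filter (fun v : ℕ => D' < (v:ℝ))).card : ℝ) ≥ (R.card : ℝ) - D' := by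
          have : (R.filter (fun v : ℕ => (v:ℝ) ≤ D')).card
              + (R.filter (fun v : ℕ => D' < (v:ℝ))).card = R.card := by
            rw [← hcompl]; exact hsp
          have hcast : ((R.filter (fun v : ℕ => (v:ℝ) ≤ D')).card : ℝ)
              + ((R.filter (fun v : ℕ => D' < (v:ℝ))).card : ℝ) = (R.card : ℝ) := by
            exact_mod_cast this
          linarith
        have hsdiff : (R.filter (fun v : ℕ => D' < (v:ℝ))).card ≤ T.card + Bad.card :=
          card_le_card_sdiff_add_card
        have hsdiffr : ((R.filter (fun v : ℕ => D' < (v:ℝ))).card : ℝ) ≤ (T.card : ℝ) + (Bad.card : ℝ) := by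
          exact_mod_cast hsdiff
        -- R.card − D' − Bad ≥ (D − D') + u + an − k − 3βn > 0
        have hpos : (0:ℝ) < (R.card : ℝ) - D' - ((k:ℝ) + 3*(β*n)) := by
          rw [hRcard]
          have : (K:ℝ) + 2 ≤ a*n := hC2
          linarith [hD'D, hu3, hkK]
        linarith [hT0, hgt, hsdiffr, hBadcard, hpos]
      obtain ⟨r, hrT⟩ := hTne
      rw [hTdef, mem_sdiff, mem_filter] at hrT
      obtain ⟨⟨hrR, hrD'⟩, hrBad⟩ := hrT
      have hrI : r ∈ Finset.Icc 1 n := RR_sub_Icc hrR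
      have hrwit : ∃ M', Reach n E GE P M M' ∧ r ∈ UC n M' := by
        rw [hRdef, RR, mem_filter] at hrR
        exact hrR.2
      obtain ⟨M', hreachM', hrU⟩ := hrwit
      obtain ⟨hMisM', hMc', hPM'⟩ := reach_inv h3 hM hP hreachM'
      have hM'm : M'.card = m := hMc'.trans hMc
      have hrP : r ∉ P := fun h => hrBad (mem_union_left _ h)
      have hrNGE : ∀ h ∈ P.filter HighP, r ∉ NGE n GE h := by
        intro h hh hc2
        exact hrBad (mem_union_right _ (mem_biUnion.2 ⟨h, hh, hc2⟩))
      have hrnge' : ∀ h ∈ P.filter HighP, ({h, r} : Finset ℕ) ∉ GE := by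
        intro h hh hge
        exact hrNGE h hh (by rw [NGE, mem_filter]; exact ⟨hrI, hge⟩)
      set P' : Finset ℕ := insert r P with hP'def
      have hP'sub : P' ⊆ UC n M' := by
        intro v hv
        rcases mem_insert.1 hv with rfl | hv'
        · exact hrU
        · exact hPM' hv'
      have hP'c : P'.card = k + 1 := by
        rw [hP'def, card_insert_of_notMem hrP, hPc]
      by_cases hrH : HighP r
      · -- collect case
        have hrPH : r ∉ P.filter HighP := fun hc2 => hrP (mem_filter.1 hc2).1
        have hfil : P'.filter HighP = insert r (P.filter HighP) := by
          rw [hP'def, filter_insert, if_pos hrH]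
        have hcnew : (P'.filter HighP).card = c + 1 := by
          rw [hfil, card_insert_of_notMem hrPH, hcdef]
        by_cases hc2 : c ≤ 2
        · refine ⟨P', M', hMisM', hM'm, hP'sub, hP'c, ?_, ?_, ?_⟩
          · intro p hp q hq hpq
            rw [hfil] at hp hq
            rcases mem_insert.1 hp with rfl | hp' <;> rcases mem_insert.1 hq with rfl | hq'
            · exact absurd rfl hpq
            · rw [Finset.pair_comm]
              exact hrnge' q hq'
            · exact hrnge' p hp'
            · exact hPpair p hp' q hq' hpq
          · omega
          · have hmono : (RR n E GE P' M').card ≤ R.card := by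
              apply card_le_card
              rw [hRdef]
              exact RR_mono (subset_insert r P) hreachM'
            have hmr : ((RR n E GE P' M').card : ℝ) ≤ (R.card : ℝ) := by exact_mod_cast hmono
            rw [hcnew]
            push_cast
            rw [hcdef] at hRbound ⊢
            push_cast at hRbound
            linarith
        · -- c = 3 : four high protected vertices, final contradiction
          exfalso
          have hc3 : c = 3 := by omega
          obtain ⟨x1, x2, x3, h12, h13, h23, hset⟩ := Finset.card_eq_three.1
            (show (P.filter HighP).card = 3 by rw [← hcdef]; exact hc3)
          have hx1PH : x1 ∈ P.filter HighP := by rw [hset]; simp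
          have hx2PH : x2 ∈ P.filter HighP := by rw [hset]; simp
          have hx3PH : x3 ∈ P.filter HighP := by rw [hset]; simp
          have hx1P := (mem_filter.1 hx1PH).1
          have hx2P := (mem_filter.1 hx2PH).1
          have hx3P := (mem_filter.1 hx3PH).1
          have hne1r : x1 ≠ r := fun h => hrP (h ▸ hx1P)
          have hne2r : x2 ≠ r := fun h => hrP (h ▸ hx2P)
          have hne3r : x3 ≠ r := fun h => hrP (h ▸ hx3P)
          exact final4 h3 hmax hdeg han hMisM' hM'm
            (hPM' hx1P) (hPM' hx2P) (hPM' hx3P) hrU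
            h12 hne3r h13 hne1r h23 hne2r
            (hPpair x1 hx1PH x2 hx2PH h12) (hrnge' x3 hx3PH)
            ((mem_filter.1 hx1PH).2) ((mem_filter.1 hx2PH).2) ((mem_filter.1 hx3PH).2) hrH
      · -- descent case
        have hD'D2 : D ≤ (n:ℝ)/2 - a*n/2 := by
          by_contra hgt
          push_neg at hgt
          have hEqD : D' = (n:ℝ)/2 - a*n/2 := min_eq_right hgt.le
          rw [hEqD] at hrD'
          exact hrH hrD'
        have hDD' : D' = D := min_eq_left hD'D2
        have hrD : D < (r:ℝ) := by rw [hDD'] at hrD'; exact hrD'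
        have hDn2 : D < (n:ℝ)/2 := by nlinarith [han, hD'D2]
        have hRD : (R.card : ℝ) - ((n:ℝ) - 3*(m:ℝ)) = D + a*n := by rw [hDdef]; ring
        have hdiamond : ∀ M'', Reach n E GE P' M' M'' → ∀ w, w ∈ UC n M'' → D < (w:ℝ) →
            w ∈ NGE n GE r ∪ P' := by
          intro M'' hreach'' w hw hwD
          by_contra hwn
          rw [mem_union] at hwn
          push_neg at hwn
          obtain ⟨hwN, hwP'⟩ := hwn
          have hreachPM'' : Reach n E GE P M M'' :=
            reach_trans hreachM' (reach_mono (subset_insert r P) hreach'')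
          have hrU'' : r ∈ UC n M'' :=
            (reach_inv h3 hMisM' hP'sub hreach'').2.2 (mem_insert_self r P)
          have hwr : w ≠ r := fun h => hwP' (by rw [h, hP'def]; exact mem_insert_self r P)
          have hwP : w ∉ P := fun h => hwP' (by rw [hP'def]; exact mem_insert_of_mem h)
          have hge2 : ({w, r} : Finset ℕ) ∉ GE := by
            intro hge3
            apply hwN
            rw [NGE, mem_filter]
            refine ⟨UC_sub_Icc hw, ?_⟩
            rw [Finset.pair_comm]
            exact hge3
          have hkey := key_real h3 hmax hdeg hM hMc hP hreachPM'' hw hrU'' hwP hrP hwr hge2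
          rw [← hRdef] at hkey
          have hminD : min (min (w:ℝ) (r:ℝ)) ((n:ℝ)/2) ≤ D := by linarith [hkey, hRD]
          have hgt2 : D < min (min (w:ℝ) (r:ℝ)) ((n:ℝ)/2) :=
            lt_min (lt_min hwD hrD) hDn2
          linarith
        have hRnew : ((RR n E GE P' M').card : ℝ) ≤ D + β*n + (k:ℝ) + 1 := by
          have hsub' : (RR n E GE P' M').filter (fun v : ℕ => ¬((v:ℝ) ≤ D)) ⊆
              NGE n GE r ∪ P' := by
            intro v hv
            rw [mem_filter] at hv
            obtain ⟨hvR', hvD⟩ := hv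
            push_neg at hvD
            rw [RR, mem_filter] at hvR'
            obtain ⟨M'', hreach'', hvU⟩ := hvR'.2
            exact hdiamond M'' hreach'' v hvU hvD
          have hsp := Finset.card_filter_add_card_filter_not
            (s := RR n E GE P' M') (p := fun v : ℕ => (v:ℝ) ≤ D)
          have h1 : (((RR n E GE P' M').filter (fun v : ℕ => (v:ℝ) ≤ D)).card : ℝ) ≤ D :=
            card_filter_le_real RR_sub_Icc hDneg
          have h2n : ((RR n E GE P' M').filter (fun v : ℕ => ¬((v:ℝ) ≤ D))).card ≤
              (NGE n GE r ∪ P').card := card_le_card hsub'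
          have h3n : (NGE n GE r ∪ P').card ≤ (NGE n GE r).card + P'.card := card_union_le _ _
          have h4 : ((NGE n GE r).card : ℝ) ≤ β*n := card_NGE hGE2 hGEdeg hrI
          have h5 : ((P'.card : ℕ) : ℝ) = (k:ℝ) + 1 := by rw [hP'c]; push_cast; ring
          have hcast : (((RR n E GE P' M').filter (fun v : ℕ => (v:ℝ) ≤ D)).card : ℝ)
              + (((RR n E GE P' M').filter (fun v : ℕ => ¬((v:ℝ) ≤ D))).card : ℝ)
              = ((RR n E GE P' M').card : ℝ) := by exact_mod_cast hsp
          have h6 : (((RR n E GE P' M').filter (fun v : ℕ => ¬((v:ℝ) ≤ D))).card : ℝ)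
              ≤ β*n + ((k:ℝ) + 1) := by
            have ha2 : (((RR n E GE P' M').filter (fun v : ℕ => ¬((v:ℝ) ≤ D))).card : ℝ)
                ≤ ((NGE n GE r ∪ P').card : ℝ) := by exact_mod_cast h2n
            have hb2 : ((NGE n GE r ∪ P').card : ℝ)
                ≤ ((NGE n GE r).card : ℝ) + ((P'.card : ℕ) : ℝ) := by exact_mod_cast h3n
            linarith [ha2, hb2, h4, h5]
          linarith [hcast, h1, h6]
        have hfil : P'.filter HighP = P.filter HighP := by
          rw [hP'def, filter_insert, if_neg hrH]
        refine ⟨P', M', hMisM', hM'm, hP'sub, hP'c, ?_, ?_, ?_⟩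
        · rw [hfil]; exact hPpair
        · rw [hfil]; exact hPHc
        · rw [hfil]
          have hexp : ((k:ℝ) + 1 - ((P.filter HighP).card : ℝ))*(a*n/2)
              = ((k:ℝ) - ((P.filter HighP).card : ℝ))*(a*n/2) + a*n/2 := by ring
          have hRboundc : (R.card : ℝ) ≤ (n:ℝ) - ((k:ℝ) - ((P.filter HighP).card : ℝ)) * (a*n/2) :=
            hRbound
          have hsmall : β*n + (k:ℝ) + 1 ≤ u + a*n/2 := by
            linarith [hu3, hC1, hkK, han]
          push_cast
          calc ((RR n E GE P' M').card : ℝ) ≤ D + β*n + (k:ℝ) + 1 := hRnew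
            _ = (R.card : ℝ) - ((n:ℝ) - 3*(m:ℝ)) - a*n + β*n + (k:ℝ) + 1 := by rw [hDdef]
            _ = (R.card : ℝ) - u - a*n + β*n + (k:ℝ) + 1 := by rw [hudef]
            _ ≤ (n:ℝ) - ((k:ℝ) - ((P.filter HighP).card : ℝ)) * (a*n/2) - u - a*n + β*n + (k:ℝ) + 1 := by
                linarith [hRboundc]
            _ ≤ (n:ℝ) - ((k:ℝ) + 1 - ((P.filter HighP).card : ℝ))*(a*n/2) := by
                rw [hexp]
                linarith [hsmall]
  -- Conclusion : the invariant at level K is absurd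
  obtain ⟨P, M, hM, hMc, hP, hPc, hPpair, hPHc, hRb⟩ := main K le_rfl
  have hcK : ((P.filter HighP).card : ℝ) ≤ 3 := by exact_mod_cast hPHc
  have hKbig : (2:ℝ)/a + 8 ≤ (K:ℝ) := by
    rw [hKdef]
    push_cast
    linarith [Nat.le_ceil ((2:ℝ)/a)]
  have h2a : ((2:ℝ)/a) * (a*n/2) = (n:ℝ) := by
    field_simp
  have hterm : (n:ℝ) + 5*(a*n/2) ≤ ((K:ℝ) - ((P.filter HighP).card:ℝ)) * (a*n/2) := by
    have h1 : (2:ℝ)/a + 5 ≤ (K:ℝ) - ((P.filter HighP).card:ℝ) := by linarith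
    have h2 : (0:ℝ) ≤ a*n/2 := by positivity
    nlinarith [h1, h2, h2a]
  have h0 : (0:ℝ) ≤ ((RR n E GE P M).card : ℝ) := Nat.cast_nonneg _
  linarith [hRb, hterm, h0, han]
end
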